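/- For every maximally-consistent base B: (i) ⊮_B ⊥; and (ii) for all classical formulas φ and ψ, ⊩_B φ→ψ if and only if ⊮_B φ or ⊩_B ψ. -/

import Mathlib

/-- A base rule: a pair of a finite set of premiss atoms and a conclusion atom. -/
structure BaseRule (At : Type) where
  prem : Finset At
  concl : At

/-- A base is a set of base rules. -/
abbrev Base (At : Type) := Set (BaseRule At)

/-- The closure of a base `B`: the least set of atoms closed under the rules of `B`. -/
inductive Closure {At : Type} (B : Base At) : At → Prop
  | step (r : BaseRule At) (hr : r ∈ B) (ih : ∀ q ∈ r.prem, Closure B q) :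
      Closure B r.concl

/-- Classical formulas: atoms, falsum and implication. -/
inductive CForm (At : Type) where
  | atom : At → CForm At
  | bot  : CForm At
  | imp  : CForm At → CForm At → CForm At

/-- Base-extension validity of a classical formula at a base. -/
def CValid {At : Type} : Base At → CForm At → Prop
  | B, .atom p  => Closure B p
  | B, .bot     => ∀ p : At, Closure B p
  | B, .imp φ ψ => ∀ C : Base At, B ⊆ C → CValid C φ → CValid C ψ

/-- Base-extension consequence: `Γ ⊩_B φ`. -/
def CCon {At : Type} (Γ : Set (CForm At)) (B : Base At) (φ : CForm At) : Prop :=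
  ∀ C : Base At, B ⊆ C → (∀ ψ ∈ Γ, CValid C ψ) → CValid C φ

/-- A base is inconsistent iff `⊥` is valid at it. -/
def CInconsistent {At : Type} (B : Base At) : Prop := CValid B CForm.bot

/-- A base is consistent iff it is not inconsistent. -/
def CConsistent {At : Type} (B : Base At) : Prop := ¬ CInconsistent B

/-- A base is maximally-consistent iff it is consistent and adding any missing
base rule makes it inconsistent. -/
def CMaxCon {At : Type} (B : Base At) : Prop :=
  CConsistent B ∧ ∀ δ : BaseRule At, δ ∈ B ∨ CInconsistent (insert δ B)

lemma Closure.mono {At : Type} {B C : Base At} (h : B ⊆ C) {p : At}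
    (hp : Closure B p) : Closure C p := by
  induction hp with
  | step r hr _ ih => exact .step r (h hr) ih

lemma CValid.of_forall_closure {At : Type} {C : Base At} (hC : ∀ p, Closure C p) :
    ∀ φ : CForm At, CValid C φ
  | .atom p => hC p
  | .bot => hC
  | .imp _ ψ => fun _ hCD _ => CValid.of_forall_closure (fun p => (hC p).mono hCD) ψ

lemma CValid.mp {At : Type} {B : Base At} {φ ψ : CForm At}
    (h : CValid B (.imp φ ψ)) (hφ : CValid B φ) : CValid B ψ :=
  h B subset_rfl hφ

/-- A proper extension of a maximally-consistent base contains a rule whose addition already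
makes it inconsistent. -/
lemma CMaxCon.eq_or_forall_closure {At : Type} {B C : Base At} (hB : CMaxCon B)
    (hBC : B ⊆ C) : C = B ∨ ∀ p, Closure C p := by
  by_cases hCB : C ⊆ B
  · exact .inl (hCB.antisymm hBC)
  · obtain ⟨δ, hδC, hδB⟩ := Set.not_subset.mp hCB
    have hinc : CInconsistent (insert δ B) := (hB.2 δ).resolve_left hδB
    exact .inr fun p => (hinc p).mono (Set.insert_subset hδC hBC)

theorem classical_behaviour_at_maxcon_general {At : Type}
    (B : Base At) (hB : CMaxCon B) :
    ¬ CValid B CForm.bot ∧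
      ∀ φ ψ : CForm At,
        CValid B (CForm.imp φ ψ) ↔ (¬ CValid B φ ∨ CValid B ψ) := by
  refine ⟨hB.1, fun φ ψ => ⟨fun h => ?_, fun h C hBC hφ => ?_⟩⟩
  · exact or_iff_not_imp_left.mpr fun hφ => h.mp (not_not.mp hφ)
  · rcases hB.eq_or_forall_closure hBC with rfl | hfull
    · exact h.resolve_left (not_not.mpr hφ)
    · exact CValid.of_forall_closure hfull ψ

/-- behaviour of ⊥ and → at maximally-consistent bases. -/
theorem classical_behaviour_at_maxcon {At : Type} [Countable At] [Infinite At]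
    (B : Base At) (hB : CMaxCon B) :
    ¬ CValid B CForm.bot ∧
      ∀ φ ψ : CForm At,
        CValid B (CForm.imp φ ψ) ↔ (¬ CValid B φ ∨ CValid B ψ) :=
  classical_behaviour_at_maxcon_general B hB
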